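/- For a q-regular connected multigraph G without loops on m vertices, where q ≥ 2 is even and m ≥ 3, the matching number M(G) satisfies M(G) ≥ min(⌊m/2⌋, ⌈(q+2)m/(3q+2)⌉). -/

import Mathlib

/-- A multigraph on vertex set `Fin m` is modeled by the multiset of its edges,
each edge being an unordered pair of vertices (parallel edges = multiplicity). -/
def Multigraph.degree {m : ℕ} (E : Multiset (Sym2 (Fin m))) (v : Fin m) : ℕ :=
  Multiset.countP (fun e => v ∈ e) E

/-- No loops: no edge is a diagonal pair. -/
def Multigraph.Loopless {m : ℕ} (E : Multiset (Sym2 (Fin m))) : Prop :=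
  ∀ e ∈ E, ¬ e.IsDiag

/-- Adjacency relation induced by the edge multiset. -/
def Multigraph.Adj {m : ℕ} (E : Multiset (Sym2 (Fin m))) (u v : Fin m) : Prop :=
  ∃ e ∈ E, u ∈ e ∧ v ∈ e ∧ u ≠ v

/-- Connectedness: any two vertices are joined by a path. -/
def Multigraph.Connected {m : ℕ} (E : Multiset (Sym2 (Fin m))) : Prop :=
  ∀ u v : Fin m, Relation.ReflTransGen (Multigraph.Adj E) u v

/-- A matching: a set of edges of the multigraph which are pairwise non-adjacent
(no two distinct edges of the matching share a vertex). -/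
def Multigraph.IsMatching {m : ℕ} (E : Multiset (Sym2 (Fin m)))
    (M : Finset (Sym2 (Fin m))) : Prop :=
  (∀ e ∈ M, e ∈ E) ∧ ∀ e ∈ M, ∀ f ∈ M, e ≠ f → ∀ v : Fin m, ¬ (v ∈ e ∧ v ∈ f)

/-!
Write `odd(G - S)` for the number of odd components of `G - S`. By the Tutte–Berge formula there
are a matching `M` and a vertex set `S` with `m - 2|M| ≤ odd(G - S) - |S|`; it follows from
Tutte's theorem applied to `G` joined to a clique on `d` new vertices, `d` being the largest
deficiency `odd(G - S) - |S|`.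
If `S = ∅`, connectivity leaves at most one odd component and `M` misses at most one vertex.
Otherwise count the edges between `S` and the odd components of `G - S`. A singleton component
sends its `q` edges to `S`; any other component `C` is left by `q|C| - 2 e(C)` edges, an even
number because `q` is, and a positive one by connectivity, hence at least `2`. With `t` singleton
and `u` larger odd components this gives `q t + 2 u ≤ q |S|` and `|S| + t + 3 u ≤ m`, whence
`(3q + 2)(t + u - |S|) ≤ (q - 2) m`, which yields the second bound.
-/

open Finset Function

theorem Multiset.sum_countP_eq_sum_map_card_filter {α ι : Type*} (E : Multiset α) (s : Finset ι)
    (p : ι → α → Prop) [∀ i, DecidablePred (p i)] :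
    ∑ i ∈ s, E.countP (p i) = (E.map fun e => #{i ∈ s | p i e}).sum := by
  induction E using Multiset.induction with
  | empty => simp
  | cons a E ih =>
    simp only [Multiset.countP_cons, sum_add_distrib, ih, Multiset.map_cons, Multiset.sum_cons,
      sum_boole, Nat.cast_id]
    ring

theorem Multiset.sum_countP_le_sum_countP {α ι κ : Type*} {E : Multiset α} {s : Finset ι}
    {t : Finset κ} {p : ι → α → Prop} {r : κ → α → Prop} [∀ i, DecidablePred (p i)]
    [∀ j, DecidablePred (r j)] (h : ∀ e ∈ E, #{i ∈ s | p i e} ≤ #{j ∈ t | r j e}) :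
    ∑ i ∈ s, E.countP (p i) ≤ ∑ j ∈ t, E.countP (r j) := by
  rw [sum_countP_eq_sum_map_card_filter, sum_countP_eq_sum_map_card_filter]
  exact sum_map_le_sum_map _ _ h

theorem Finset.mul_card_filter_add_mul_card_filter_not_le_sum {α : Type*} (s : Finset α)
    (p : α → Prop) [DecidablePred p] (f : α → ℕ) {a b : ℕ} (ha : ∀ i ∈ s, p i → a ≤ f i)
    (hb : ∀ i ∈ s, ¬ p i → b ≤ f i) :
    a * #{i ∈ s | p i} + b * #{i ∈ s | ¬ p i} ≤ ∑ i ∈ s, f i := by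
  rw [← sum_filter_add_sum_filter_not s p, mul_comm a, mul_comm b]
  gcongr
  · exact card_nsmul_le_sum _ _ _ fun i hi => ha i (mem_filter.1 hi).1 (mem_filter.1 hi).2
  · exact card_nsmul_le_sum _ _ _ fun i hi => hb i (mem_filter.1 hi).1 (mem_filter.1 hi).2

namespace SimpleGraph

variable {V W : Type*} {G : SimpleGraph V}

theorem Iso.ncard_oddComponents_eq {V' : Type*} {H' : SimpleGraph V'} (φ : G ≃g H') :
    G.oddComponents.ncard = H'.oddComponents.ncard := by
  refine Set.ncard_congr (fun c _ => φ.connectedComponentEquiv c) (fun c hc => ?_)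
    (fun c _ c' _ h => φ.connectedComponentEquiv.injective h)
    (fun c' hc' => ⟨φ.connectedComponentEquiv.symm c', ?_, by simp⟩)
  · simp only [Set.mem_ofPred_eq, ← Nat.card_coe_set_eq] at hc ⊢
    rwa [← Nat.card_congr (ConnectedComponent.isoEquivSupp φ c)]
  · simp only [Set.mem_ofPred_eq, ← Nat.card_coe_set_eq] at hc' ⊢
    rwa [Nat.card_congr (ConnectedComponent.isoEquivSupp φ _), Equiv.apply_symm_apply]

theorem Subgraph.IsMatching.ncard_verts_le [Finite V] {M : G.Subgraph} (hM : M.IsMatching) :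
    M.verts.ncard ≤ 2 * M.edgeSet.ncard := by
  have hfin : M.edgeSet.Finite := Set.toFinite _
  rw [hM.verts_eq_biUnion_edgeSet, ← hfin.coe_toFinset, Set.ncard_coe_finset]
  simp only [mem_coe]
  calc _ ≤ ∑ e ∈ hfin.toFinset, (e : Set V).ncard := set_ncard_biUnion_le _ _
    _ ≤ ∑ _e ∈ hfin.toFinset, 2 := sum_le_sum fun e _ => ?_
    _ = 2 * #hfin.toFinset := by rw [sum_const, smul_eq_mul, mul_comm]
  induction e using Sym2.ind with
  | h a b => rw [Sym2.coe_mk]; exact (Set.ncard_insert_le _ _).trans (by simp)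

def joinClique (G : SimpleGraph V) (W : Type*) : SimpleGraph (V ⊕ W) where
  Adj x y := match x, y with
    | .inl u, .inl v => G.Adj u v
    | .inr i, .inr j => i ≠ j
    | _, _ => True
  symm := ⟨by rintro (u | i) (v | j) h <;> simp_all [G.adj_comm, eq_comm]⟩
  loopless := ⟨by rintro (u | i) h <;> simp_all⟩

@[simp] lemma joinClique_adj_inl_inl {u v : V} :
    (G.joinClique W).Adj (.inl u) (.inl v) ↔ G.Adj u v := Iff.rfl

@[simp] lemma joinClique_adj_inr_inr {i j : W} :
    (G.joinClique W).Adj (.inr i) (.inr j) ↔ i ≠ j := Iff.rfl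

@[simp] lemma joinClique_adj_inl_inr {u : V} {i : W} : (G.joinClique W).Adj (.inl u) (.inr i) :=
  trivial

lemma preconnected_deleteVerts_joinClique {u : Set (V ⊕ W)} {i : W} (hi : .inr i ∉ u) :
    ((⊤ : (G.joinClique W).Subgraph).deleteVerts u).coe.Preconnected := by
  have hsink (x : ((⊤ : (G.joinClique W).Subgraph).deleteVerts u).verts) :
      (Subgraph.coe _).Reachable x ⟨.inr i, by simp [hi]⟩ := by
    obtain ⟨x | j, hx⟩ := x <;> rw [Subgraph.deleteVerts_verts] at hx
    · exact Adj.reachable (by simp_all)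
    · by_cases hij : j = i
      · subst hij; rfl
      · exact Adj.reachable (by simp_all)
  exact fun x y => (hsink x).trans (hsink y).symm

lemma ncard_oddComponents_deleteVerts_joinClique {u : Set (V ⊕ W)} (hu : Set.range .inr ⊆ u) :
    ((⊤ : (G.joinClique W).Subgraph).deleteVerts u).coe.oddComponents.ncard =
      ((⊤ : G.Subgraph).deleteVerts (.inl ⁻¹' u)).coe.oddComponents.ncard := by
  let f : ((⊤ : G.Subgraph).deleteVerts (.inl ⁻¹' u)).verts →
      ((⊤ : (G.joinClique W).Subgraph).deleteVerts u).verts :=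
    fun v => ⟨.inl v.1, by simpa using v.2⟩
  have hf : f.Bijective := by
    refine ⟨fun v w h => Subtype.ext (Sum.inl_injective (congrArg Subtype.val h)), ?_⟩
    rintro ⟨x | i, hx⟩ <;> simp only [Subgraph.deleteVerts_verts, Subgraph.verts_top,
      Set.mem_sdiff, Set.mem_univ, true_and] at hx
    · exact ⟨⟨x, by simpa using hx⟩, rfl⟩
    · exact absurd (hu ⟨i, rfl⟩) hx
  exact (Iso.ncard_oddComponents_eq ⟨Equiv.ofBijective f hf, by simp [f]⟩).symm

lemma ncard_eq_ncard_preimage_inl_add [Finite V] [Finite W] {u : Set (V ⊕ W)}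
    (hu : Set.range .inr ⊆ u) : u.ncard = (.inl ⁻¹' u : Set V).ncard + Nat.card W := by
  have hsplit : u = .inl '' (.inl ⁻¹' u : Set V) ∪ Set.range .inr := by
    ext (x | i) <;> simp [hu ⟨_, rfl⟩]
  conv_lhs => rw [hsplit]
  rw [Set.ncard_union_eq, Set.ncard_image_of_injective _ Sum.inl_injective,
    Set.ncard_range_of_injective Sum.inr_injective]
  rw [Set.disjoint_left]
  rintro _ ⟨x, -, rfl⟩ ⟨i, h⟩
  simp at h

lemma joinClique_not_isTutteViolator [Finite V] [Finite W] (hpar : Even (Nat.card V + Nat.card W))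
    (h : ∀ s : Set V,
      ((⊤ : G.Subgraph).deleteVerts s).coe.oddComponents.ncard ≤ s.ncard + Nat.card W)
    (u : Set (V ⊕ W)) : ¬ (G.joinClique W).IsTutteViolator u := by
  rw [IsTutteViolator, not_lt]
  by_cases hu : Set.range .inr ⊆ u
  · rw [ncard_oddComponents_deleteVerts_joinClique hu, ncard_eq_ncard_preimage_inl_add hu]
    exact h _
  obtain ⟨_, ⟨i, rfl⟩, hi⟩ := Set.not_subset.1 hu
  have hle : ((⊤ : (G.joinClique W).Subgraph).deleteVerts u).coe.oddComponents.ncard ≤ 1 :=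
    have := (preconnected_deleteVerts_joinClique (G := G) hi).subsingleton_connectedComponent
    Set.ncard_le_one_of_subsingleton _
  rcases u.eq_empty_or_nonempty with rfl | hne
  · have hcard : Nat.card ((⊤ : (G.joinClique W).Subgraph).deleteVerts ∅).verts =
        Nat.card V + Nat.card W := by
      simp [Nat.card_sum]
    have heven :
        ¬ Odd ((⊤ : (G.joinClique W).Subgraph).deleteVerts ∅).coe.oddComponents.ncard := by
      rw [odd_ncard_oddComponents, hcard]
      exact Nat.not_odd_iff_even.2 hpar
    rw [Nat.odd_iff] at heven
    rw [Set.ncard_empty]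
    omega
  · exact hle.trans ((Set.ncard_pos).2 hne)

lemma exists_isMatching_of_isPerfectMatching_joinClique [Finite V] [Finite W]
    {M' : (G.joinClique W).Subgraph} (hM' : M'.IsPerfectMatching) :
    ∃ M : G.Subgraph, M.IsMatching ∧ Nat.card V ≤ M.verts.ncard + Nat.card W := by
  let M : G.Subgraph :=
    { verts := {v | ∃ w, M'.Adj (.inl v) (.inl w)}
      Adj u v := M'.Adj (.inl u) (.inl v)
      adj_sub h := M'.adj_sub h
      edge_vert h := ⟨_, h⟩
      symm := ⟨fun _ _ h => h.symm⟩ }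
  have hM : M.IsMatching := fun v ⟨w, hw⟩ =>
    ⟨w, hw, fun w' hw' => Sum.inl_injective (hM'.1.eq_of_adj_left hw' hw)⟩
  let T : Set V := {v | ∃ i, M'.Adj (.inl v) (.inr i)}
  have hcover : Set.univ ⊆ M.verts ∪ T := by
    intro v _
    obtain ⟨w | i, hw, -⟩ := Subgraph.isPerfectMatching_iff.1 hM' (.inl v)
    exacts [Or.inl ⟨w, hw⟩, Or.inr ⟨i, hw⟩]
  have hT : T.ncard ≤ Nat.card W := by
    rw [← Nat.card_coe_set_eq]
    refine Nat.card_le_card_of_injective (fun v : T => v.2.choose) fun v w h => ?_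
    have hv := v.2.choose_spec
    rw [show v.2.choose = w.2.choose from h] at hv
    exact Subtype.ext (Sum.inl_injective (hM'.1.eq_of_adj_right hv w.2.choose_spec))
  refine ⟨M, hM, ?_⟩
  calc Nat.card V = (Set.univ : Set V).ncard := (Set.ncard_univ V).symm
    _ ≤ (M.verts ∪ T).ncard := Set.ncard_le_ncard hcover
    _ ≤ M.verts.ncard + T.ncard := Set.ncard_union_le _ _
    _ ≤ M.verts.ncard + Nat.card W := by gcongr

theorem exists_isMatching_card_add_ncard_le [Finite V] :
    ∃ M : G.Subgraph, M.IsMatching ∧ ∃ u : Set V, Nat.card V + u.ncard ≤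
      M.verts.ncard + ((⊤ : G.Subgraph).deleteVerts u).coe.oddComponents.ncard := by
  let odd (s : Set V) : ℕ := ((⊤ : G.Subgraph).deleteVerts s).coe.oddComponents.ncard
  obtain ⟨u, hu⟩ := Finite.exists_max fun s : Set V => (odd s : ℤ) - s.ncard
  obtain ⟨d, hd⟩ : ∃ d : ℕ, (odd u : ℤ) - u.ncard = d :=
    Int.eq_ofNat_of_zero_le (by have := hu ∅; simp only [Set.ncard_empty] at this; omega)
  have hviol (s : Set V) : odd s ≤ s.ncard + Nat.card (Fin d) := by
    have := hu s
    rw [Nat.card_fin]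
    omega
  have hpar : Even (Nat.card V + Nat.card (Fin d)) := by
    have hcard : Nat.card ((⊤ : G.Subgraph).deleteVerts u).verts + u.ncard = Nat.card V := by
      rw [Subgraph.deleteVerts_verts, Subgraph.verts_top, ← Set.compl_eq_univ_sdiff,
        Nat.card_coe_set_eq, add_comm, Set.ncard_add_ncard_compl]
    have hodd : Odd (odd u) ↔ _ := odd_ncard_oddComponents ((⊤ : G.Subgraph).deleteVerts u).coe
    rw [Nat.odd_iff, Nat.odd_iff] at hodd
    rw [Nat.card_fin, ← hcard, Nat.even_iff]
    omega
  obtain ⟨M', hM'⟩ := tutte.2 (joinClique_not_isTutteViolator hpar hviol)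
  obtain ⟨M, hM, hcard⟩ := exists_isMatching_of_isPerfectMatching_joinClique hM'
  refine ⟨M, hM, u, ?_⟩
  rw [Nat.card_fin] at hcard
  change Nat.card V + u.ncard ≤ M.verts.ncard + odd u
  omega

end SimpleGraph

theorem mul_sub_le_of_cut_le_of_card_le {q s t u m : ℕ} (hq : 2 ≤ q)
    (hcut : q * t + 2 * u ≤ q * s) (hvert : s + t + 3 * u ≤ m) :
    (3 * q + 2) * ((t + u : ℤ) - s) ≤ (q - 2) * m := by
  have hq' : (2 : ℤ) ≤ q := by exact_mod_cast hq
  have hcut' : (q : ℤ) * t + 2 * u ≤ q * s := by exact_mod_cast hcut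
  have hvert' : (s : ℤ) + t + 3 * u ≤ m := by exact_mod_cast hvert
  have hA : (q : ℤ) * ((t + u : ℤ) - s) ≤ (q - 2) * u := by linarith
  have hB : (3 * q + 2 : ℤ) * u ≤ q * m := by nlinarith
  have h : (q : ℤ) * ((3 * q + 2) * ((t + u : ℤ) - s)) ≤ q * ((q - 2) * m) := by
    nlinarith [mul_le_mul_of_nonneg_left hA (by positivity : (0 : ℤ) ≤ 3 * q + 2),
      mul_le_mul_of_nonneg_left hB (by linarith : (0 : ℤ) ≤ q - 2)]
  exact le_of_mul_le_mul_left h (by omega)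

theorem min_floor_ceil_le {q m k : ℕ} (h : m ≤ 2 * k + 1 ∨ (q + 2) * m ≤ (3 * q + 2) * k) :
    min ⌊(m : ℚ) / 2⌋ ⌈((q : ℚ) + 2) * m / (3 * q + 2)⌉ ≤ (k : ℤ) := by
  rcases h with h | h
  · refine (min_le_left _ _).trans (Int.floor_le_iff.2 ?_)
    rw [div_lt_iff₀ two_pos]
    exact_mod_cast (by omega : m < (k + 1) * 2)
  · refine (min_le_right _ _).trans (Int.ceil_le.2 ?_)
    rw [div_le_iff₀ (by positivity)]
    exact_mod_cast (by linarith : (q + 2) * m ≤ k * (3 * q + 2))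

namespace Multigraph

variable {m : ℕ} {E : Multiset (Sym2 (Fin m))}

def toSimpleGraph (E : Multiset (Sym2 (Fin m))) : SimpleGraph (Fin m) where
  Adj := Adj E
  symm := ⟨fun _ _ ⟨e, he, hu, hv, huv⟩ => ⟨e, he, hv, hu, huv.symm⟩⟩
  loopless := ⟨fun _ ⟨_, _, _, _, h⟩ => h rfl⟩

lemma isMatching_toFinset_edgeSet {M : (toSimpleGraph E).Subgraph} (hM : M.IsMatching)
    [Fintype M.edgeSet] : IsMatching E M.edgeSet.toFinset := by
  refine ⟨fun e he => ?_, fun e he f hf hef v ⟨hve, hvf⟩ => hef ?_⟩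
  · rw [Set.mem_toFinset] at he
    induction e using Sym2.ind with
    | h a b =>
      obtain ⟨e', he', ha, hb, hab⟩ := M.adj_sub he
      rwa [← Sym2.eq_of_ne_mem hab ha hb (Sym2.mem_mk_left a b) (Sym2.mem_mk_right a b)]
  · rw [Set.mem_toFinset] at he hf
    obtain ⟨a, rfl⟩ := Sym2.mem_iff_exists.1 hve
    obtain ⟨b, rfl⟩ := Sym2.mem_iff_exists.1 hvf
    rw [hM.eq_of_adj_left (SimpleGraph.Subgraph.mem_edgeSet.1 he)
      (SimpleGraph.Subgraph.mem_edgeSet.1 hf)]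

lemma Connected.exists_adj_boundary (hconn : Connected E) {C : Finset (Fin m)} {a b : Fin m}
    (ha : a ∈ C) (hb : b ∉ C) : ∃ x ∈ C, ∃ y ∉ C, Adj E x y := by
  have hreach : (toSimpleGraph E).Reachable a b :=
    (SimpleGraph.reachable_iff_reflTransGen a b).2 (hconn a b)
  obtain ⟨d, -, hd₁, hd₂⟩ := hreach.some.exists_boundary_dart (C : Set (Fin m)) ha hb
  exact ⟨_, hd₁, _, hd₂, d.adj⟩

def cut (E : Multiset (Sym2 (Fin m))) (C : Finset (Fin m)) : ℕ :=
  E.countP fun e => (∃ v ∈ e, v ∈ C) ∧ ∃ v ∈ e, v ∉ C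

lemma card_filter_mem_of_not_isDiag {C : Finset (Fin m)} {e : Sym2 (Fin m)} (he : ¬ e.IsDiag) :
    #{v ∈ C | v ∈ e} = 2 * (if ∀ v ∈ e, v ∈ C then 1 else 0) +
      (if (∃ v ∈ e, v ∈ C) ∧ ∃ v ∈ e, v ∉ C then 1 else 0) := by
  induction e using Sym2.ind with
  | h a b =>
    have hab : a ≠ b := by simpa using he
    have hfilter : {v ∈ C | v ∈ s(a, b)} = ({a, b} : Finset (Fin m)).filter (· ∈ C) := by
      ext v
      simp [and_comm]
    rw [hfilter, filter_insert, filter_singleton]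
    by_cases ha : a ∈ C <;> by_cases hb : b ∈ C <;> simp [ha, hb, hab]

lemma sum_degree_eq (hloop : Loopless E) (C : Finset (Fin m)) :
    ∑ v ∈ C, degree E v = 2 * E.countP (fun e => ∀ v ∈ e, v ∈ C) + cut E C := by
  rw [show ∑ v ∈ C, degree E v = (E.map fun e => #{v ∈ C | v ∈ e}).sum from
    Multiset.sum_countP_eq_sum_map_card_filter E C _,
    Multiset.map_congr rfl fun e he => card_filter_mem_of_not_isDiag (hloop e he), cut]
  clear hloop
  induction E using Multiset.induction with
  | empty => simp
  | cons a E ih =>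
    simp only [Multiset.map_cons, Multiset.sum_cons, Multiset.countP_cons, ih]
    ring

lemma even_cut {q : ℕ} (hq : Even q) (hloop : Loopless E) (hreg : ∀ v, degree E v = q)
    (C : Finset (Fin m)) : Even (cut E C) := by
  have h := sum_degree_eq hloop C
  simp only [hreg, sum_const, smul_eq_mul] at h
  have : Even (2 * E.countP (fun e => ∀ v ∈ e, v ∈ C) + cut E C) := h ▸ hq.mul_left _
  exact (Nat.even_add.1 this).1 (even_two_mul _)

lemma cut_singleton (hloop : Loopless E) (v : Fin m) : cut E {v} = degree E v := by
  refine Multiset.countP_congr rfl fun e he => propext ?_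
  induction e using Sym2.ind with
  | h a b =>
    have hab : a ≠ b := by simpa using hloop _ he
    constructor
    · rintro ⟨⟨w, hw, hwv⟩, -⟩
      simpa [mem_singleton.1 hwv] using hw
    · intro hv
      rcases Sym2.mem_iff.1 hv with rfl | rfl
      · exact ⟨⟨v, by simp, by simp⟩, b, by simp, by simpa using hab.symm⟩
      · exact ⟨⟨v, by simp, by simp⟩, a, by simp, by simpa using hab⟩

lemma cut_pos (hconn : Connected E) {C : Finset (Fin m)} {a b : Fin m} (ha : a ∈ C)
    (hb : b ∉ C) : 0 < cut E C := by
  obtain ⟨x, hx, y, hy, e, he, hxe, hye, -⟩ := hconn.exists_adj_boundary ha hb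
  exact Multiset.countP_pos.2 ⟨e, he, ⟨x, hxe, hx⟩, y, hye, hy⟩

structure IsOddComponents (E : Multiset (Sym2 (Fin m))) (S : Finset (Fin m)) {ι : Type*}
    (C : ι → Finset (Fin m)) : Prop where
  pairwise_disjoint : Pairwise (Disjoint on C)
  disjoint : ∀ i, Disjoint (C i) S
  odd_card : ∀ i, Odd #(C i)
  closed : ∀ i, ∀ a ∈ C i, ∀ b, Adj E a b → b ∈ C i ∨ b ∈ S

namespace IsOddComponents

variable {S : Finset (Fin m)} {ι : Type*} {C : ι → Finset (Fin m)}

lemma nonempty (h : IsOddComponents E S C) (i : ι) : (C i).Nonempty :=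
  card_pos.1 (h.odd_card i).pos

lemma card_add_sum_card_le [Fintype ι] (h : IsOddComponents E S C) :
    #S + ∑ i, #(C i) ≤ m := by
  classical
  rw [← card_biUnion fun i _ j _ hij => h.pairwise_disjoint hij, ← card_union_of_disjoint]
  · exact (card_le_univ _).trans (Fintype.card_fin m).le
  · exact (disjoint_biUnion_right _ _ _).2 fun i _ => (h.disjoint i).symm

/-- A crossing edge has its outer end in `S`, so it leaves only the component of its other end. -/
lemma card_crossing_le [Fintype ι] (h : IsOddComponents E S C) {e : Sym2 (Fin m)} (he : e ∈ E) :
    #{i | (∃ v ∈ e, v ∈ C i) ∧ ∃ v ∈ e, v ∉ C i} ≤ #{v ∈ S | v ∈ e} := by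
  set crossing : Finset ι := {i | (∃ v ∈ e, v ∈ C i) ∧ ∃ v ∈ e, v ∉ C i}
  rcases crossing.eq_empty_or_nonempty with h0 | ⟨i, hi⟩
  · simp [h0]
  obtain ⟨⟨x, hx, hxC⟩, y, hy, hyC⟩ := (mem_filter.1 hi).2
  have hxy : x ≠ y := fun h => hyC (h ▸ hxC)
  have hyS : y ∈ S := (h.closed i x hxC y ⟨e, he, hx, hy, hxy⟩).resolve_left hyC
  have he_eq : e = s(x, y) :=
    Sym2.eq_of_ne_mem hxy hx hy (Sym2.mem_mk_left x y) (Sym2.mem_mk_right x y)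
  have hx_mem : ∀ j ∈ crossing, x ∈ C j := by
    intro j hj
    obtain ⟨z, hz, hzC⟩ := (mem_filter.1 hj).2.1
    rcases Sym2.mem_iff.1 (he_eq ▸ hz) with rfl | rfl
    · exact hzC
    · exact absurd hyS (disjoint_left.1 (h.disjoint j) hzC)
  calc #crossing ≤ 1 := card_le_one.2 fun j hj j' hj' => by
          by_contra hne
          exact disjoint_left.1 (h.pairwise_disjoint hne) (hx_mem j hj) (hx_mem j' hj')
    _ ≤ _ := card_pos.2 ⟨y, mem_filter.2 ⟨hyS, hy⟩⟩

lemma sum_cut_le [Fintype ι] (h : IsOddComponents E S C) :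
    ∑ i, cut E (C i) ≤ ∑ v ∈ S, degree E v :=
  Multiset.sum_countP_le_sum_countP fun _ he => h.card_crossing_le he

lemma two_le_cut {q : ℕ} (hq : Even q) (hloop : Loopless E) (hreg : ∀ v, degree E v = q)
    (hconn : Connected E) (h : IsOddComponents E S C) (hS : S.Nonempty) (i : ι) :
    2 ≤ cut E (C i) := by
  obtain ⟨a, ha⟩ := h.nonempty i
  obtain ⟨b, hb⟩ := hS
  have hpos := cut_pos hconn ha (disjoint_right.1 (h.disjoint i) hb)
  obtain ⟨k, hk⟩ := even_cut hq hloop hreg (C i)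
  omega

lemma card_le_one [Fintype ι] (h : IsOddComponents E ∅ C) (hconn : Connected E) :
    Fintype.card ι ≤ 1 := by
  have huniv (i : ι) : C i = univ := by
    obtain ⟨a, ha⟩ := h.nonempty i
    by_contra hne
    obtain ⟨b, -, hb⟩ := exists_of_ssubset (ssubset_univ_iff.2 hne)
    obtain ⟨x, hx, y, hy, hxy⟩ := hconn.exists_adj_boundary ha hb
    simpa [hy] using h.closed i x hx y hxy
  refine Fintype.card_le_one_iff.2 fun i j => by_contra fun hij => ?_
  obtain ⟨a, ha⟩ := h.nonempty i
  exact disjoint_left.1 (h.pairwise_disjoint hij) ha (huniv j ▸ mem_univ a)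

theorem mul_card_sub_card_le [Fintype ι] {q : ℕ} (hq : 2 ≤ q) (hqe : Even q)
    (hloop : Loopless E) (hreg : ∀ v, degree E v = q) (hconn : Connected E)
    (h : IsOddComponents E S C) (hS : S.Nonempty) :
    (3 * q + 2) * ((Fintype.card ι : ℤ) - #S) ≤ (q - 2) * m := by
  classical
  have hcut : q * #{i | #(C i) = 1} + 2 * #{i | #(C i) ≠ 1} ≤ q * #S :=
    calc _ ≤ ∑ i, cut E (C i) := by
          refine mul_card_filter_add_mul_card_filter_not_le_sum _ _ _ (fun i _ hi => ?_)
            fun i _ _ => h.two_le_cut hqe hloop hreg hconn hS i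
          obtain ⟨v, hv⟩ := card_eq_one.1 hi
          rw [hv, cut_singleton hloop, hreg]
      _ ≤ ∑ v ∈ S, degree E v := h.sum_cut_le
      _ = q * #S := by simp [hreg, mul_comm]
  have hvert : 1 * #{i | #(C i) = 1} + 3 * #{i | #(C i) ≠ 1} ≤ ∑ i, #(C i) := by
    refine mul_card_filter_add_mul_card_filter_not_le_sum _ _ _ (fun i _ hi => hi.ge)
      fun i _ hi => ?_
    obtain ⟨k, hk⟩ := h.odd_card i
    omega
  rw [← card_univ, ← card_filter_add_card_filter_not (fun i => #(C i) = 1), Nat.cast_add]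
  exact mul_sub_le_of_cut_le_of_card_le hq hcut (by linarith [h.card_add_sum_card_le])

end IsOddComponents

open Classical in
lemma isOddComponents_oddComponents (u : Set (Fin m)) :
    IsOddComponents E u.toFinset
      fun c : ((⊤ : (toSimpleGraph E).Subgraph).deleteVerts u).coe.oddComponents =>
        (Subtype.val '' c.1.supp).toFinset where
  pairwise_disjoint c c' hcc' := by
    simp only [onFun, Set.disjoint_toFinset]
    exact (Set.disjoint_image_iff Subtype.val_injective).2
      (SimpleGraph.pairwise_disjoint_supp_connectedComponent _ (Subtype.coe_ne_coe.2 hcc'))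
  disjoint c := by
    rw [Set.disjoint_toFinset, Set.disjoint_left]
    rintro _ ⟨v, -, rfl⟩
    simpa using v.2
  odd_card c := by
    rw [← Set.ncard_eq_toFinset_card', Set.ncard_image_of_injective _ Subtype.val_injective]
    exact c.2
  closed c a ha b hab := by
    simp only [Set.mem_toFinset] at ha ⊢
    by_cases hb : b ∈ u
    · exact Or.inr hb
    obtain ⟨v, -, rfl⟩ := id ha
    refine Or.inl (SimpleGraph.ConnectedComponent.mem_coe_supp_of_adj ha (by simp [hb]) ?_)
    exact SimpleGraph.Subgraph.deleteVerts_adj.2 ⟨trivial, by simpa using v.2, trivial, hb, hab⟩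

end Multigraph

theorem matching_number_lower_bound_even_general (q m : ℕ) (hq : 2 ≤ q) (hqeven : Even q)
    (E : Multiset (Sym2 (Fin m)))
    (hloop : Multigraph.Loopless E) (hconn : Multigraph.Connected E)
    (hreg : ∀ v : Fin m, Multigraph.degree E v = q) :
    ∃ M : Finset (Sym2 (Fin m)), Multigraph.IsMatching E M ∧
      min ⌊(m : ℚ) / 2⌋ ⌈((q : ℚ) + 2) * m / (3 * q + 2)⌉ ≤ (M.card : ℤ) := by
  classical
  obtain ⟨M, hM, u, hu⟩ := (Multigraph.toSimpleGraph E).exists_isMatching_card_add_ncard_le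
  refine ⟨M.edgeSet.toFinset, Multigraph.isMatching_toFinset_edgeSet hM, min_floor_ceil_le ?_⟩
  have hverts : M.verts.ncard ≤ 2 * #M.edgeSet.toFinset :=
    Set.ncard_eq_toFinset_card' M.edgeSet ▸ hM.ncard_verts_le
  have hodd := Multigraph.isOddComponents_oddComponents (E := E) u
  rw [Nat.card_fin] at hu
  rcases u.toFinset.eq_empty_or_nonempty with hS | hS
  · rw [hS] at hodd
    have hle := hodd.card_le_one hconn
    rw [Fintype.card_eq_nat_card, Nat.card_coe_set_eq] at hle
    left
    omega
  · have key := hodd.mul_card_sub_card_le hq hqeven hloop hreg hconn hS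
    rw [Fintype.card_eq_nat_card, Nat.card_coe_set_eq, ← Set.ncard_eq_toFinset_card'] at key
    right
    have hu' : (m : ℤ) + u.ncard ≤ 2 * #M.edgeSet.toFinset +
        ((⊤ : (Multigraph.toSimpleGraph E).Subgraph).deleteVerts u).coe.oddComponents.ncard := by
      exact_mod_cast hu.trans (by omega)
    have : ((q : ℤ) + 2) * m ≤ (3 * q + 2) * #M.edgeSet.toFinset := by nlinarith
    exact_mod_cast this

/-- For a `q`-regular connected loopless multigraph on `m ≥ 3` vertices with `q ≥ 2` even,
the matching number is at least `min(⌊m/2⌋, ⌈(q+2)m/(3q+2)⌉)`. -/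
theorem matching_number_lower_bound_even (q m : ℕ) (hq : 2 ≤ q) (hqeven : Even q)
    (hm : 3 ≤ m) (E : Multiset (Sym2 (Fin m)))
    (hloop : Multigraph.Loopless E) (hconn : Multigraph.Connected E)
    (hreg : ∀ v : Fin m, Multigraph.degree E v = q) :
    ∃ M : Finset (Sym2 (Fin m)), Multigraph.IsMatching E M ∧
      min ⌊(m : ℚ) / 2⌋ ⌈((q : ℚ) + 2) * m / (3 * q + 2)⌉ ≤ (M.card : ℤ) :=
  matching_number_lower_bound_even_general q m hq hqeven E hloop hconn hreg
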